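/- Let k ≥ 1 and m₀ ≥ 1 be integers, and consider a data set of m = m₀·k points partitioned into k clusters with exactly m₀ points in each cluster. If in each repeat of k-means the k initial seeds are chosen uniformly at random among all k-element subsets of the m points, and a repeat is a success exactly when each cluster contains exactly one seed, then the expected number of independent repeats until the first success equals C(m₀·k, k) / m₀^k, and this expectation is at most e^k (so the average number of repeats k-means needs to achieve the competitive performance of LDPS-means is O(e^k)). -/

import Mathlib

/-!
A successful seed set picks exactly one point from each of the `k` disjoint clusters, so the
successful sets correspond to choice functions `Fin k → α` with `f j ∈ B j`; there are
`m₀ ^ k` of them among `C(m₀ k, k)` seed sets. The number of repeats is geometric with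
mean `1 / p`, and `C(m₀ k, k) / m₀ ^ k ≤ (m₀ k) ^ k / (k! m₀ ^ k) = k ^ k / k! ≤ e ^ k`.
-/

open Finset Function

section Transversal

variable {α ι : Type*} [Fintype ι] [DecidableEq ι] {B : ι → Finset α} {f : ι → α}

lemma injective_of_mem_piFinset_of_pairwise_disjoint (hB : Pairwise (Disjoint on B))
    (hf : f ∈ Fintype.piFinset B) : Injective f := by
  rw [Fintype.mem_piFinset] at hf
  intro i j hij
  by_contra hne
  exact disjoint_left.mp (hB hne) (hf i) (hij ▸ hf j)

lemma image_univ_inter_eq_singleton_of_mem_piFinset [DecidableEq α]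
    (hB : Pairwise (Disjoint on B)) (hf : f ∈ Fintype.piFinset B) (j : ι) :
    univ.image f ∩ B j = {f j} := by
  rw [Fintype.mem_piFinset] at hf
  ext a
  simp only [mem_inter, mem_image, mem_univ, true_and, mem_singleton]
  constructor
  · rintro ⟨⟨i, rfl⟩, hij⟩
    by_contra hne
    exact disjoint_left.mp (hB (ne_of_apply_ne f hne)) (hf i) hij
  · rintro rfl
    exact ⟨⟨j, rfl⟩, hf j⟩

theorem card_powersetCard_filter_card_inter_eq_one [DecidableEq α]
    (hB : Pairwise (Disjoint on B)) :
    (((univ.biUnion B).powersetCard (Fintype.card ι)).filter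
      (fun t ↦ ∀ j, (t ∩ B j).card = 1)).card = ∏ j, (B j).card := by
  rw [← Fintype.card_piFinset]
  symm
  refine card_bij (fun f _ ↦ univ.image f) (fun f hf ↦ ?_) (fun f hf g hg hfg ↦ ?_)
    (fun t ht ↦ ?_)
  · have hf' := Fintype.mem_piFinset.mp hf
    simp only [mem_filter, mem_powersetCard]
    refine ⟨⟨fun a ha ↦ ?_, ?_⟩, fun j ↦ ?_⟩
    · obtain ⟨i, -, rfl⟩ := mem_image.mp ha
      exact mem_biUnion.mpr ⟨i, mem_univ i, hf' i⟩
    · rw [card_image_of_injective _ (injective_of_mem_piFinset_of_pairwise_disjoint hB hf),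
        card_univ]
    · rw [image_univ_inter_eq_singleton_of_mem_piFinset hB hf, card_singleton]
  · funext j
    have hfj : f j ∈ univ.image g ∩ B j :=
      mem_inter.mpr ⟨hfg ▸ mem_image_of_mem f (mem_univ j), Fintype.mem_piFinset.mp hf j⟩
    rwa [image_univ_inter_eq_singleton_of_mem_piFinset hB hg, mem_singleton] at hfj
  · simp only [mem_filter, mem_powersetCard] at ht
    obtain ⟨⟨htB, -⟩, ht1⟩ := ht
    choose f hf using fun j ↦ card_eq_one.mp (ht1 j)
    have hft : ∀ j, f j ∈ t ∩ B j := fun j ↦ hf j ▸ mem_singleton_self _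
    refine ⟨f, Fintype.mem_piFinset.mpr fun j ↦ (mem_inter.mp (hft j)).2, ?_⟩
    ext a
    simp only [mem_image, mem_univ, true_and]
    refine ⟨fun ⟨j, hj⟩ ↦ hj ▸ (mem_inter.mp (hft j)).1, fun hat ↦ ?_⟩
    obtain ⟨j, -, haj⟩ := mem_biUnion.mp (htB hat)
    have ha : a ∈ t ∩ B j := mem_inter.mpr ⟨hat, haj⟩
    rw [hf j, mem_singleton] at ha
    exact ⟨j, ha.symm⟩

end Transversal

theorem tsum_succ_mul_mul_one_sub_pow {p : ℝ} (hp₀ : 0 < p) (hp₁ : p ≤ 1) :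
    ∑' n : ℕ, ((n : ℝ) + 1) * p * (1 - p) ^ n = 1 / p := by
  have hq : ‖1 - p‖ < 1 := by
    rw [Real.norm_eq_abs, abs_lt]
    constructor <;> linarith
  have hmean := tsum_choose_mul_geometric_of_norm_lt_one 1 hq
  simp only [Nat.choose_one_right, Nat.cast_add, Nat.cast_one, sub_sub_cancel] at hmean
  simp_rw [mul_right_comm _ p, tsum_mul_right, hmean]
  field_simp

theorem choose_mul_div_pow_le_exp_one_pow {m : ℕ} (hm : 0 < m) (k : ℕ) :
    ((m * k).choose k : ℝ) / (m : ℝ) ^ k ≤ Real.exp 1 ^ k := by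
  have hm' : (0 : ℝ) < m := Nat.cast_pos.mpr hm
  calc ((m * k).choose k : ℝ) / (m : ℝ) ^ k
      ≤ ((m * k : ℕ) : ℝ) ^ k / k.factorial / (m : ℝ) ^ k := by
        gcongr
        exact Nat.choose_le_pow_div k (m * k)
    _ = (k : ℝ) ^ k / k.factorial := by
        push_cast
        rw [mul_pow]
        field_simp
    _ ≤ Real.exp k := Real.pow_div_factorial_le_exp _ (Nat.cast_nonneg k) k
    _ = Real.exp 1 ^ k := by rw [← Real.exp_nat_mul, mul_one]

theorem expected_repeats_eq_and_le_exp_general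
    {α : Type*} [DecidableEq α] (k m₀ : ℕ) (hm₀ : 1 ≤ m₀)
    (S : Finset α) (B : Fin k → Finset α)
    (hS : S.card = m₀ * k)
    (hB : ∀ j, (B j).card = m₀)
    (hdisj : ∀ i j, i ≠ j → Disjoint (B i) (B j))
    (hunion : Finset.univ.biUnion B = S)
    (p : ℝ)
    (hp : p = (((S.powersetCard k).filter
        (fun t => ∀ j, (t ∩ B j).card = 1)).card : ℝ) / ((S.powersetCard k).card : ℝ)) :
    (∑' n : ℕ, ((n : ℝ) + 1) * p * (1 - p) ^ n)
        = ((m₀ * k).choose k : ℝ) / (m₀ : ℝ) ^ k ∧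
    (∑' n : ℕ, ((n : ℝ) + 1) * p * (1 - p) ^ n) ≤ Real.exp 1 ^ k := by
  subst hunion
  have hsuccess : (((univ.biUnion B).powersetCard k).filter
      (fun t ↦ ∀ j, (t ∩ B j).card = 1)).card = m₀ ^ k := by
    have h := card_powersetCard_filter_card_inter_eq_one (B := B) hdisj
    simp only [Fintype.card_fin, hB, prod_const, card_univ] at h
    -- the filters differ in their `Decidable` instance (`Nat.decidableForallFin` here)
    convert h
  have htotal : ((univ.biUnion B).powersetCard k).card = (m₀ * k).choose k := by
    rw [card_powersetCard, hS]
  have hp₁ : p ≤ 1 :=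
    hp ▸ div_le_one_of_le₀ (mod_cast card_filter_le _ _) (Nat.cast_nonneg _)
  rw [hsuccess, htotal] at hp
  have hp₀ : 0 < p := by
    have := Nat.choose_pos (Nat.le_mul_of_pos_left k hm₀)
    rw [hp]
    positivity
  rw [tsum_succ_mul_mul_one_sub_pow hp₀ hp₁, hp, Nat.cast_pow, one_div_div]
  exact ⟨rfl, choose_mul_div_pow_le_exp_one_pow hm₀ k⟩

/-- Let `k ≥ 1`, `m₀ ≥ 1`, and let a data set `S` of `m = m₀·k` points be
partitioned into `k` clusters `B j`, each of exactly `m₀` points.  In each repeat, the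
`k` initial seeds form a uniformly random `k`-element subset of `S`; a repeat succeeds
exactly when each cluster contains exactly one seed (probability `p` = #successful
subsets / #all `k`-subsets).  The expected number of independent repeats until the first
success (geometric distribution: `∑ (n+1)·p·(1−p)ⁿ`) equals `C(m₀·k, k) / m₀^k`, and is
at most `e^k`. -/
theorem expected_repeats_eq_and_le_exp
    {α : Type*} [DecidableEq α] (k m₀ : ℕ) (hk : 1 ≤ k) (hm₀ : 1 ≤ m₀)
    (S : Finset α) (B : Fin k → Finset α)
    (hS : S.card = m₀ * k)
    (hB : ∀ j, (B j).card = m₀)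
    (hdisj : ∀ i j, i ≠ j → Disjoint (B i) (B j))
    (hunion : Finset.univ.biUnion B = S)
    (p : ℝ)
    (hp : p = (((S.powersetCard k).filter
        (fun t => ∀ j, (t ∩ B j).card = 1)).card : ℝ) / ((S.powersetCard k).card : ℝ)) :
    (∑' n : ℕ, ((n : ℝ) + 1) * p * (1 - p) ^ n)
        = ((m₀ * k).choose k : ℝ) / (m₀ : ℝ) ^ k ∧
    (∑' n : ℕ, ((n : ℝ) + 1) * p * (1 - p) ^ n) ≤ Real.exp 1 ^ k :=
  expected_repeats_eq_and_le_exp_general k m₀ hm₀ S B hS hB hdisj hunion p hp
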